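/- arXiv:1405.2183 — 3 statements merged into one kernel-verified Lean document; each statement's English description precedes it below -/
import Mathlib

section
/- Let 1 ≤ p < d and 1 ≤ k < d−p−1 be integers. Define η(d,p,k) = (d/2)^{−kp/2} · ∏_{i=1}^k Γ((d−i+1)/2)/Γ((d−p−i+1)/2). Then 0 < η(d,p,k) ≤ exp[ (p²/d) · (1 − (p+k−1)/d)^{−1} · k²/2 ]. -/
/-!
Each factor of `η(d,p,k)` is a ratio `Γ(y) / Γ(y - p/2)` with `y ≤ d/2`. Log-convexity of `Γ`
gives `Γ(x + s) ≤ Γ(x) x^s` for `s ∈ [0, 1]`, and the functional equation extends this to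
`Γ(x + t) ≤ Γ(x) (x + t)^t` for all `t ≥ 0`. Hence every factor is at most `(d/2)^(p/2)`, so
`η(d,p,k) ≤ 1`, which is below the stated exponential bound since its exponent is nonnegative.
-/

open Real Finset

namespace Real

theorem Gamma_add_le_mul_rpow {x s : ℝ} (hx : 0 < x) (hs0 : 0 ≤ s) (hs1 : s ≤ 1) :
    Gamma (x + s) ≤ Gamma x * x ^ s := by
  have hΓx := Gamma_pos_of_pos hx
  have hconv := convexOn_log_Gamma.2 (Set.mem_Ioi.2 hx) (Set.mem_Ioi.2 (by linarith : 0 < x + 1))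
    (by linarith : 0 ≤ 1 - s) hs0 (by ring)
  simp only [smul_eq_mul, Function.comp_apply] at hconv
  rw [show (1 - s) * x + s * (x + 1) = x + s by ring, Gamma_add_one hx.ne',
    log_mul hx.ne' hΓx.ne'] at hconv
  calc Gamma (x + s) = exp (log (Gamma (x + s))) :=
        (exp_log (Gamma_pos_of_pos (by linarith))).symm
    _ ≤ exp (log (Gamma x) + s * log x) := exp_le_exp.2 (by linarith)
    _ = Gamma x * x ^ s := by rw [exp_add, exp_log hΓx, rpow_def_of_pos hx, mul_comm s]

theorem Gamma_add_natCast_add_le (n : ℕ) {x s : ℝ} (hx : 0 < x) (hs0 : 0 ≤ s) (hs1 : s ≤ 1) :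
    Gamma (x + (n + s)) ≤ Gamma x * (x + (n + s)) ^ ((n : ℝ) + s) := by
  induction n generalizing x with
  | zero =>
    simp only [Nat.cast_zero, zero_add]
    exact (Gamma_add_le_mul_rpow hx hs0 hs1).trans <| mul_le_mul_of_nonneg_left
      (rpow_le_rpow hx.le (by linarith) hs0) (Gamma_pos_of_pos hx).le
  | succ n ih =>
    set c := x + ((n + 1 : ℕ) + s)
    have hc : x + 1 + (n + s) = c := by push_cast [c]; ring
    have hxc : x ≤ c := by push_cast [c]; linarith [(Nat.cast_nonneg n : (0 : ℝ) ≤ n)]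
    calc Gamma c = Gamma (x + 1 + (n + s)) := by rw [hc]
      _ ≤ Gamma (x + 1) * c ^ ((n : ℝ) + s) := hc ▸ ih (by linarith)
      _ = x * Gamma x * c ^ ((n : ℝ) + s) := by rw [Gamma_add_one hx.ne']
      _ ≤ c * Gamma x * c ^ ((n : ℝ) + s) := by gcongr
      _ = Gamma x * c ^ (((n + 1 : ℕ) : ℝ) + s) := by
        rw [show (((n + 1 : ℕ) : ℝ) + s) = ((n : ℝ) + s) + 1 by push_cast; ring,
          rpow_add_one (by linarith)]
        ring

theorem Gamma_add_le_mul_rpow_add {x t : ℝ} (hx : 0 < x) (ht : 0 ≤ t) :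
    Gamma (x + t) ≤ Gamma x * (x + t) ^ t := by
  have hfloor := Nat.floor_le ht
  have hfract := Nat.lt_floor_add_one t
  have key := Gamma_add_natCast_add_le ⌊t⌋₊ hx (sub_nonneg.2 hfloor) (by linarith)
  rwa [add_sub_cancel] at key

theorem Gamma_div_Gamma_sub_le_rpow {y t : ℝ} (ht : 0 ≤ t) (hyt : t < y) :
    Gamma y / Gamma (y - t) ≤ y ^ t := by
  have key := Gamma_add_le_mul_rpow_add (sub_pos.2 hyt) ht
  rw [sub_add_cancel] at key
  rwa [div_le_iff₀ (Gamma_pos_of_pos (sub_pos.2 hyt)), mul_comm]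

end Real

/-- The normalizing constant `η(d,p,k)`. -/
noncomputable def rotationalClonesEta (d p k : ℕ) : ℝ :=
  ((d : ℝ) / 2) ^ (-((k : ℝ) * p) / 2) *
    ∏ i ∈ Icc 1 k, Gamma (((d : ℝ) - i + 1) / 2) / Gamma (((d : ℝ) - p - i + 1) / 2)

section Eta

variable {d p k : ℕ}

theorem rotationalClonesEta_factor_pos (h : p + k ≤ d) {i : ℕ} (hi : i ∈ Icc 1 k) :
    0 < Gamma (((d : ℝ) - i + 1) / 2) / Gamma (((d : ℝ) - p - i + 1) / 2) := by
  have hik : p + i ≤ d := by have := (mem_Icc.1 hi).2; omega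
  have hik' : (p : ℝ) + i ≤ d := by exact_mod_cast hik
  exact div_pos (Gamma_pos_of_pos (by linarith [(Nat.cast_nonneg p : (0 : ℝ) ≤ p)]))
    (Gamma_pos_of_pos (by linarith))

theorem rotationalClonesEta_factor_le (h : p + k ≤ d) {i : ℕ} (hi : i ∈ Icc 1 k) :
    Gamma (((d : ℝ) - i + 1) / 2) / Gamma (((d : ℝ) - p - i + 1) / 2)
      ≤ ((d : ℝ) / 2) ^ ((p : ℝ) / 2) := by
  obtain ⟨hi1, hik⟩ := mem_Icc.1 hi
  have hi1' : (1 : ℝ) ≤ i := by exact_mod_cast hi1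
  have hpi : (p : ℝ) + i ≤ d := by exact_mod_cast (show p + i ≤ d by omega)
  have hsub : ((d : ℝ) - p - i + 1) / 2 = ((d : ℝ) - i + 1) / 2 - p / 2 := by ring
  rw [hsub]
  calc _ ≤ (((d : ℝ) - i + 1) / 2) ^ ((p : ℝ) / 2) :=
        Gamma_div_Gamma_sub_le_rpow (by positivity) (by linarith)
    _ ≤ ((d : ℝ) / 2) ^ ((p : ℝ) / 2) := by
        gcongr
        · linarith [(Nat.cast_nonneg p : (0 : ℝ) ≤ p)]
        · linarith

theorem rotationalClonesEta_pos (hd : 0 < d) (h : p + k ≤ d) : 0 < rotationalClonesEta d p k :=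
  mul_pos (rpow_pos_of_pos (by positivity) _)
    (prod_pos fun _ hi => rotationalClonesEta_factor_pos h hi)

theorem rotationalClonesEta_le_one (hd : 0 < d) (h : p + k ≤ d) :
    rotationalClonesEta d p k ≤ 1 := by
  have hd2 : (0 : ℝ) < d / 2 := by positivity
  have hprod : ∏ i ∈ Icc 1 k, Gamma (((d : ℝ) - i + 1) / 2) / Gamma (((d : ℝ) - p - i + 1) / 2)
      ≤ ((d : ℝ) / 2) ^ ((p : ℝ) / 2 * k) := by
    calc _ ≤ ∏ _i ∈ Icc 1 k, ((d : ℝ) / 2) ^ ((p : ℝ) / 2) :=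
          prod_le_prod (fun _ hi => (rotationalClonesEta_factor_pos h hi).le)
            fun _ hi => rotationalClonesEta_factor_le h hi
      _ = ((d : ℝ) / 2) ^ ((p : ℝ) / 2 * k) := by
          rw [prod_const, Nat.card_Icc, Nat.add_sub_cancel, rpow_mul_natCast hd2.le]
  calc rotationalClonesEta d p k
      ≤ ((d : ℝ) / 2) ^ (-((k : ℝ) * p) / 2) * ((d : ℝ) / 2) ^ ((p : ℝ) / 2 * k) :=
        mul_le_mul_of_nonneg_left hprod (rpow_pos_of_pos hd2 _).le
    _ = 1 := by rw [← rpow_add hd2, show -((k : ℝ) * p) / 2 + p / 2 * k = 0 by ring, rpow_zero]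

end Eta

theorem eta_normalizing_constant_bound_general (d p k : ℕ)
    (hkd : k + p + 1 < d) :
    0 < ((d : ℝ) / 2) ^ (-((k : ℝ) * p) / 2) *
        ∏ i ∈ Finset.Icc 1 k,
          Real.Gamma (((d : ℝ) - i + 1) / 2) / Real.Gamma (((d : ℝ) - p - i + 1) / 2) ∧
    ((d : ℝ) / 2) ^ (-((k : ℝ) * p) / 2) *
        ∏ i ∈ Finset.Icc 1 k,
          Real.Gamma (((d : ℝ) - i + 1) / 2) / Real.Gamma (((d : ℝ) - p - i + 1) / 2)
      ≤ Real.exp ((p : ℝ) ^ 2 / d * (1 - ((p : ℝ) + k - 1) / d)⁻¹ * k ^ 2 / 2) := by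
  have hd : 0 < d := by omega
  have hpk : p + k ≤ d := by omega
  have hgap : 0 < 1 - ((p : ℝ) + k - 1) / d := by
    have : (p : ℝ) + k - 1 < d := by
      have : ((k + p + 1 : ℕ) : ℝ) < d := by exact_mod_cast hkd
      push_cast at this; linarith
    rw [sub_pos, div_lt_one (by exact_mod_cast hd)]
    exact this
  exact ⟨rotationalClonesEta_pos hd hpk,
    (rotationalClonesEta_le_one hd hpk).trans (one_le_exp (by positivity))⟩

/-- Bound on the normalizing constant `η(d,p,k)` of the rotational-clones density:
for `1 ≤ p < d` and `1 ≤ k < d − p − 1`,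
`0 < η(d,p,k) ≤ exp[(p²/d)·(1 − (p+k−1)/d)⁻¹·k²/2]`, where
`η(d,p,k) = (d/2)^(−kp/2) ∏_{i=1}^k Γ((d−i+1)/2)/Γ((d−p−i+1)/2)`. -/
theorem eta_normalizing_constant_bound (d p k : ℕ)
    (hp : 1 ≤ p) (hpd : p < d) (hk : 1 ≤ k) (hkd : k + p + 1 < d) :
    0 < ((d : ℝ) / 2) ^ (-((k : ℝ) * p) / 2) *
        ∏ i ∈ Finset.Icc 1 k,
          Real.Gamma (((d : ℝ) - i + 1) / 2) / Real.Gamma (((d : ℝ) - p - i + 1) / 2) ∧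
    ((d : ℝ) / 2) ^ (-((k : ℝ) * p) / 2) *
        ∏ i ∈ Finset.Icc 1 k,
          Real.Gamma (((d : ℝ) - i + 1) / 2) / Real.Gamma (((d : ℝ) - p - i + 1) / 2)
      ≤ Real.exp ((p : ℝ) ^ 2 / d * (1 - ((p : ℝ) + k - 1) / d)⁻¹ * k ^ 2 / 2) :=
  eta_normalizing_constant_bound_general d p k hkd
end

section
/- In the setting of the previous equivalence (w_1,…,w_k linearly independent, N = [w_1,…,w_k], x ∈ ℝ^p with ‖x‖²·ι'(N'N)^{−1}ι < 1, and B a d×p matrix with orthonormal columns satisfying w_j = Bx + (I_d−BB')w_j for all j and rank([N,B]) = k+p), the matrix A = (I_d − N(N'N)^{−1}N')B satisfies det(A'A) = 1 − ‖x‖²·ι'(N'N)^{−1}ι. -/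
/-! With `P = N(N'N)⁻¹N'` symmetric and idempotent, `A'A = B'(I - P)B = I - (B'N)(N'N)⁻¹(B'N)'`.
The hypothesis on the `w_j` forces `B'N = x ι'`, so the correction term is the rank-one matrix
`(ι'(N'N)⁻¹ι) x x'`, and the matrix determinant lemma gives `det(A'A) = 1 - ‖x‖² ι'(N'N)⁻¹ι`. -/

open Matrix

namespace Matrix

variable {R : Type*} [CommRing R] {l m n : Type*}

lemma isUnit_transpose_mul_self_of_linearIndependent_col [Fintype m] [Fintype n] [DecidableEq n]
    {N : Matrix m n ℝ} (hN : LinearIndependent ℝ N.col) : IsUnit (Nᵀ * N) :=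
  (PosDef.conjTranspose_mul_self N (mulVec_injective_iff.2 hN)).isUnit

section Projection

variable [Fintype m] [Fintype n] [DecidableEq n]

lemma isSymm_mul_inv_transpose_mul_self_mul_transpose (N : Matrix m n R) :
    (N * (Nᵀ * N)⁻¹ * Nᵀ).IsSymm := by
  rw [IsSymm, transpose_mul, transpose_mul, transpose_transpose, transpose_nonsing_inv,
    transpose_mul, transpose_transpose, Matrix.mul_assoc]

lemma isIdempotentElem_mul_inv_transpose_mul_self_mul_transpose {N : Matrix m n R}
    (hN : IsUnit (Nᵀ * N).det) : IsIdempotentElem (N * (Nᵀ * N)⁻¹ * Nᵀ) := by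
  calc N * (Nᵀ * N)⁻¹ * Nᵀ * (N * (Nᵀ * N)⁻¹ * Nᵀ)
      = N * ((Nᵀ * N)⁻¹ * (Nᵀ * N)) * (Nᵀ * N)⁻¹ * Nᵀ := by simp only [Matrix.mul_assoc]
    _ = N * (Nᵀ * N)⁻¹ * Nᵀ := by rw [nonsing_inv_mul _ hN, Matrix.mul_one]

lemma residual_gram_eq [DecidableEq m] {N : Matrix m n R} (hN : IsUnit (Nᵀ * N).det)
    (B : Matrix m l R) :
    ((1 - N * (Nᵀ * N)⁻¹ * Nᵀ) * B)ᵀ * ((1 - N * (Nᵀ * N)⁻¹ * Nᵀ) * B) =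
      Bᵀ * B - Bᵀ * N * (Nᵀ * N)⁻¹ * (Bᵀ * N)ᵀ := by
  set P := N * (Nᵀ * N)⁻¹ * Nᵀ with hP
  have hsymm : Pᵀ = P := isSymm_mul_inv_transpose_mul_self_mul_transpose N
  have hidem : (1 - P) * (1 - P) = 1 - P := by
    rw [Matrix.sub_mul, Matrix.mul_sub, Matrix.mul_sub,
      (isIdempotentElem_mul_inv_transpose_mul_self_mul_transpose hN).eq]
    noncomm_ring
  calc ((1 - P) * B)ᵀ * ((1 - P) * B) = Bᵀ * ((1 - P) * (1 - P)) * B := by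
        rw [transpose_mul, transpose_sub, transpose_one, hsymm]
        simp only [Matrix.mul_assoc]
    _ = Bᵀ * B - Bᵀ * N * (Nᵀ * N)⁻¹ * (Bᵀ * N)ᵀ := by
        rw [hidem, hP, transpose_mul, transpose_transpose]
        simp only [Matrix.mul_sub, Matrix.sub_mul, Matrix.mul_one, Matrix.mul_assoc]

end Projection

lemma transpose_mul_eq_of_eq_mul_add [Fintype l] [DecidableEq l] [Fintype m] [DecidableEq m]
    {B : Matrix m l R} {N : Matrix m n R} {X : Matrix l n R} (hB : Bᵀ * B = 1)
    (hN : N = B * X + (1 - B * Bᵀ) * N) :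
    Bᵀ * N = X := by
  rw [hN, Matrix.mul_add, ← Matrix.mul_assoc, ← Matrix.mul_assoc, Matrix.mul_sub, Matrix.mul_one,
    ← Matrix.mul_assoc, hB, Matrix.one_mul, Matrix.one_mul, sub_self, Matrix.zero_mul, add_zero]

lemma replicateCol_mul_mul_replicateRow [Fintype n] (v w : m → R) (G : Matrix n n R) :
    replicateCol n v * G * replicateRow n w = (∑ i, ∑ j, G i j) • vecMulVec v w := by
  ext a b
  simp only [mul_apply, replicateCol_apply, replicateRow_apply, smul_apply, vecMulVec_apply,
    smul_eq_mul, Finset.sum_mul]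
  rw [Finset.sum_comm]
  exact Finset.sum_congr rfl fun _ _ => Finset.sum_congr rfl fun _ _ => by ring

lemma det_one_sub_smul_vecMulVec [Fintype m] [DecidableEq m] (c : R) (v w : m → R) :
    (1 - c • vecMulVec v w).det = 1 - c * (w ⬝ᵥ v) := by
  rw [sub_eq_add_neg, ← neg_smul, ← smul_vecMulVec, vecMulVec_eq Unit,
    det_one_add_replicateCol_mul_replicateRow, dotProduct_smul, smul_eq_mul, neg_mul,
    ← sub_eq_add_neg, mul_comm]

end Matrix

theorem det_residual_gram_general {d p k : ℕ}
    (N : Matrix (Fin d) (Fin k) ℝ)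
    (hN : LinearIndependent ℝ fun j : Fin k => (fun i => N i j : Fin d → ℝ))
    (x : Fin p → ℝ)
    (B : Matrix (Fin d) (Fin p) ℝ)
    (hB : Bᵀ * B = 1)
    (hw : ∀ j : Fin k,
      (fun i => N i j) = B.mulVec x + (1 - B * Bᵀ).mulVec fun i => N i j) :
    (((1 - N * (Nᵀ * N)⁻¹ * Nᵀ) * B)ᵀ * ((1 - N * (Nᵀ * N)⁻¹ * Nᵀ) * B)).det =
      1 - (∑ i, x i ^ 2) * (∑ i, ∑ j, (Nᵀ * N)⁻¹ i j) := by
  have hNN : IsUnit (Nᵀ * N).det :=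
    (isUnit_iff_isUnit_det _).1 (isUnit_transpose_mul_self_of_linearIndependent_col hN)
  have hBN : Bᵀ * N = replicateCol (Fin k) x := by
    refine transpose_mul_eq_of_eq_mul_add hB ?_
    ext i j
    simpa [mul_apply, mulVec, dotProduct] using congrFun (hw j) i
  rw [residual_gram_eq hNN, hB, hBN, transpose_replicateCol, replicateCol_mul_mul_replicateRow,
    det_one_sub_smul_vecMulVec, mul_comm]
  simp only [dotProduct, sq]

/-- With `N = [w₁,…,w_k]` of full column rank, `x` with `‖x‖²·ι'(N'N)⁻¹ι < 1`, and `B`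
orthonormal with `w_j = Bx + (I−BB')w_j` and `rank [N,B] = k+p`, the matrix
`A = (I − N(N'N)⁻¹N')B` satisfies `det(A'A) = 1 − ‖x‖²·ι'(N'N)⁻¹ι`. -/
theorem det_residual_gram {d p k : ℕ} (hk : 1 ≤ k) (hkd : k + p ≤ d)
    (N : Matrix (Fin d) (Fin k) ℝ)
    (hN : LinearIndependent ℝ fun j : Fin k => (fun i => N i j : Fin d → ℝ))
    (x : Fin p → ℝ)
    (hx : (∑ i, x i ^ 2) * (∑ i, ∑ j, (Nᵀ * N)⁻¹ i j) < 1)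
    (B : Matrix (Fin d) (Fin p) ℝ)
    (hB : Bᵀ * B = 1)
    (hrank : (fromCols N B).rank = k + p)
    (hw : ∀ j : Fin k,
      (fun i => N i j) = B.mulVec x + (1 - B * Bᵀ).mulVec fun i => N i j) :
    (((1 - N * (Nᵀ * N)⁻¹ * Nᵀ) * B)ᵀ * ((1 - N * (Nᵀ * N)⁻¹ * Nᵀ) * B)).det =
      1 - (∑ i, x i ^ 2) * (∑ i, ∑ j, (Nᵀ * N)⁻¹ i j) :=
  det_residual_gram_general N hN x B hB hw
end

section
/- Let k and p be positive integers and g₂(z) = z^{−p/2} for z > 0. Then g₂(z) = p₂(z−1) + δ₂, where p₂(y) = 1 + Σ_{j=1}^k [(−1/2)^j/j! · ∏_{i=0}^{j−1}(p+2i)] y^j is a polynomial of degree k whose j-th coefficient is bounded in absolute value by p^j, and the remainder satisfies sup_{z : |z−1| < 1/(2p)} |δ₂| / |z−1|^{k+1} ≤ p^{k+1} · (2e)^{1/4} · 2^{k+1}. -/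
/-!
The Taylor coefficients of `z ↦ z ^ r` at `1` are `descPochhammer r j / j!`, which for
`r = -p/2` equal `(-1/2)^j ∏_{i<j} (p + 2i) / j!`; since `p + 2i ≤ 2p(i+1)` they are bounded by
`p ^ j`. Lagrange's form of the remainder gives `δ₂ = descPochhammer r (k+1) / (k+1)! ·
ξ ^ (-p/2 - (k+1)) · (z-1)^(k+1)` for some `ξ` between `1` and `z`, so `ξ ≥ 1 - 1/(2p) ≥ 1/2`.
Then `ξ ^ (-(k+1)) ≤ 2 ^ (k+1)`, and `ξ ^ (-p/2) ≤ (2e)^(1/4)` because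
`-log (1 - t) ≤ (1 + log 2) t` for `0 ≤ t ≤ 1/2`.
-/

open Finset Real Polynomial Set
open scoped Nat

lemma descPochhammer_eval_neg_half (p : ℝ) (j : ℕ) :
    (descPochhammer ℝ j).eval (-p / 2) = (-1 / 2) ^ j * ∏ i ∈ range j, (p + 2 * i) :=
  calc (descPochhammer ℝ j).eval (-p / 2) = ∏ i ∈ range j, (-1 / 2 * (p + 2 * i)) := by
        rw [descPochhammer_eval_eq_prod_range]
        exact prod_congr rfl fun i _ => by ring
    _ = (-1 / 2) ^ j * ∏ i ∈ range j, (p + 2 * i) := by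
        rw [prod_mul_distrib, prod_const, card_range]

lemma prod_add_two_mul_le {p : ℝ} (hp : 1 ≤ p) (j : ℕ) :
    ∏ i ∈ range j, (p + 2 * i) ≤ (2 * p) ^ j * j ! :=
  calc ∏ i ∈ range j, (p + 2 * i) ≤ ∏ i ∈ range j, (2 * p * (i + 1)) := by
        gcongr with i
        nlinarith [(i.cast_nonneg : (0:ℝ) ≤ i)]
    _ = (2 * p) ^ j * j ! := by
        rw [prod_mul_distrib, prod_const, card_range, ← prod_range_add_one_eq_factorial]
        push_cast; rfl

lemma abs_descPochhammer_eval_neg_half_div_factorial_le {p : ℝ} (hp : 1 ≤ p) (j : ℕ) :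
    |(descPochhammer ℝ j).eval (-p / 2) / j !| ≤ p ^ j := by
  have hprod : 0 ≤ ∏ i ∈ range j, (p + 2 * i) := prod_nonneg fun i _ => by positivity
  rw [descPochhammer_eval_neg_half, abs_div, abs_mul, abs_pow, abs_of_nonneg hprod, Nat.abs_cast,
    div_le_iff₀ (by positivity), show |(-1 / 2 : ℝ)| = 1 / 2 by norm_num]
  calc (1 / 2 : ℝ) ^ j * ∏ i ∈ range j, (p + 2 * i) ≤ (1 / 2) ^ j * ((2 * p) ^ j * j !) := by
        gcongr; exact prod_add_two_mul_le hp j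
    _ = p ^ j * j ! := by rw [← mul_assoc, ← mul_pow]; ring

lemma neg_log_one_sub_le {t : ℝ} (ht0 : 0 ≤ t) (ht : t ≤ 1 / 2) :
    -log (1 - t) ≤ (1 + log 2) * t := by
  have h1t : 0 < 1 - t := by linarith
  rw [← log_inv]
  -- bound the two summands of `log (1-t)⁻¹ = (1-t) log (1-t)⁻¹ + t log (1-t)⁻¹` separately
  have hweight_one_sub : (1 - t) * log (1 - t)⁻¹ ≤ t := by
    have := log_le_sub_one_of_pos (inv_pos.2 h1t)
    calc (1 - t) * log (1 - t)⁻¹ ≤ (1 - t) * ((1 - t)⁻¹ - 1) := by gcongr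
      _ = t := by field_simp; ring
  have hweight_t : t * log (1 - t)⁻¹ ≤ t * log 2 := by
    gcongr
    rw [inv_le_comm₀ h1t two_pos]; linarith
  linarith

lemma rpow_neg_half_le {p ξ : ℝ} (hp : 1 ≤ p) (hξ : 1 - 1 / (2 * p) ≤ ξ) :
    ξ ^ (-p / 2) ≤ (2 * exp 1) ^ (1 / 4 : ℝ) := by
  have ht : 1 / (2 * p) ≤ 1 / 2 := by gcongr; linarith
  have hξ0 : 0 < ξ := by linarith
  have hlog : -log ξ ≤ (1 + log 2) * (1 / (2 * p)) :=
    (neg_le_neg (log_le_log (by linarith) hξ)).trans (neg_log_one_sub_le (by positivity) ht)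
  rw [rpow_def_of_pos hξ0, rpow_def_of_pos (by positivity), log_mul two_ne_zero (exp_ne_zero 1),
    log_exp, exp_le_exp]
  have hp0 : 0 < p := by linarith
  calc log ξ * (-p / 2) = (-log ξ) * (p / 2) := by ring
    _ ≤ (1 + log 2) * (1 / (2 * p)) * (p / 2) := by gcongr
    _ = (log 2 + 1) * (1 / 4) := by field_simp; ring

lemma rpow_neg_half_sub_le {p ξ : ℝ} (hp : 1 ≤ p) (hξ : 1 - 1 / (2 * p) ≤ ξ) (n : ℕ) :
    ξ ^ (-p / 2 - n) ≤ (2 * exp 1) ^ (1 / 4 : ℝ) * 2 ^ n := by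
  have ht : 1 / (2 * p) ≤ 1 / 2 := by gcongr; linarith
  have hξ0 : 0 < ξ := by linarith
  rw [rpow_sub hξ0, rpow_natCast, div_eq_mul_inv, ← inv_pow]
  refine mul_le_mul (rpow_neg_half_le hp hξ) (pow_le_pow_left₀ (by positivity) ?_ n)
    (by positivity) (by positivity)
  rw [inv_le_comm₀ hξ0 two_pos]
  linarith

theorem exists_rpow_eq_taylor_add_lagrange (r : ℝ) {z : ℝ} (hz : 0 < z) (n : ℕ) :
    ∃ ξ ∈ uIcc 1 z, z ^ r =
      ∑ j ∈ range (n + 1), (descPochhammer ℝ j).eval r / j ! * (z - 1) ^ j +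
        (descPochhammer ℝ (n + 1)).eval r / (n + 1)! * ξ ^ (r - (n + 1 : ℕ)) * (z - 1) ^ (n + 1) := by
  rcases eq_or_ne z 1 with rfl | hz1
  · exact ⟨1, left_mem_uIcc, by simp [sum_range_succ']⟩
  have hsmooth (m : ℕ) : ∀ x ∈ uIcc 1 z, ContDiffAt ℝ m (fun x : ℝ => x ^ r) x :=
    fun x hx => contDiffAt_rpow_const_of_ne (lt_of_lt_of_le (lt_min one_pos hz) hx.1).ne'
  have hderiv (m : ℕ) (x : ℝ) :
      iteratedDeriv m (fun x : ℝ => x ^ r) x = (descPochhammer ℝ m).eval r * x ^ (r - m) := by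
    rw [iteratedDeriv_eq_iterate, iter_deriv_rpow_const]
  obtain ⟨ξ, hξ, hrem⟩ := taylor_mean_remainder_lagrange_iteratedDeriv hz1.symm
    (fun x hx => (hsmooth (n + 1) x hx).contDiffWithinAt)
  have htaylor : taylorWithinEval (fun x : ℝ => x ^ r) n (uIcc 1 z) 1 z =
      ∑ j ∈ range (n + 1), (descPochhammer ℝ j).eval r / j ! * (z - 1) ^ j := by
    rw [taylor_within_apply]
    refine sum_congr rfl fun j _ => ?_
    rw [iteratedDerivWithin_eq_iteratedDeriv (uniqueDiffOn_uIcc hz1.symm)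
      (hsmooth j 1 left_mem_uIcc) left_mem_uIcc, hderiv, one_rpow, smul_eq_mul]
    ring
  refine ⟨ξ, uIoo_subset_uIcc_self hξ, ?_⟩
  rw [← sub_eq_iff_eq_add', ← htaylor, hrem, hderiv]
  push_cast
  ring

theorem rpow_neg_half_p_taylor_general (k p : ℕ) (hp : 0 < p) :
    (∀ j ∈ Finset.Icc 1 k,
      |(-1 / 2 : ℝ) ^ j / (Nat.factorial j : ℝ) * ∏ i ∈ Finset.range j, ((p : ℝ) + 2 * i)|
        ≤ (p : ℝ) ^ j) ∧
    ∀ z : ℝ, 0 < z → |z - 1| < 1 / (2 * (p : ℝ)) →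
      |z ^ (-(p : ℝ) / 2) -
          (1 + ∑ j ∈ Finset.Icc 1 k,
            (-1 / 2 : ℝ) ^ j / (Nat.factorial j : ℝ) *
              (∏ i ∈ Finset.range j, ((p : ℝ) + 2 * i)) * (z - 1) ^ j)|
        ≤ (p : ℝ) ^ (k + 1) * (2 * Real.exp 1) ^ ((1 : ℝ) / 4) * 2 ^ (k + 1) *
            |z - 1| ^ (k + 1) := by
  have hp1 : (1 : ℝ) ≤ p := by exact_mod_cast hp
  have hcoeff (j : ℕ) : (-1 / 2 : ℝ) ^ j / j ! * ∏ i ∈ range j, ((p : ℝ) + 2 * i) =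
      (descPochhammer ℝ j).eval (-(p : ℝ) / 2) / j ! := by
    rw [descPochhammer_eval_neg_half]; ring
  refine ⟨fun j _ => hcoeff j ▸ abs_descPochhammer_eval_neg_half_div_factorial_le hp1 j,
    fun z hz hz1 => ?_⟩
  obtain ⟨ξ, hξ, hexp⟩ := exists_rpow_eq_taylor_add_lagrange (-(p : ℝ) / 2) hz k
  have hξp : 1 - 1 / (2 * p) ≤ ξ :=
    (le_min (by linarith [show (0 : ℝ) < 1 / (2 * p) by positivity])
      (by linarith [(abs_lt.1 hz1).1])).trans hξ.1
  have hξ0 : 0 < ξ := by linarith [show 1 / (2 * (p : ℝ)) ≤ 1 / 2 by gcongr; linarith]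
  have hsplit : ∑ j ∈ range (k + 1), (descPochhammer ℝ j).eval (-(p : ℝ) / 2) / j ! * (z - 1) ^ j =
      1 + ∑ j ∈ Icc 1 k, (descPochhammer ℝ j).eval (-(p : ℝ) / 2) / j ! * (z - 1) ^ j := by
    rw [range_eq_Ico, sum_eq_sum_Ico_succ_bot k.add_one_pos, zero_add,
      Finset.Ico_add_one_right_eq_Icc]
    simp
  simp_rw [hcoeff]
  rw [hexp, ← hsplit, add_sub_cancel_left]
  calc _ = |(descPochhammer ℝ (k + 1)).eval (-(p : ℝ) / 2) / (k + 1)!| *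
        ξ ^ (-(p : ℝ) / 2 - (k + 1 : ℕ)) * |z - 1| ^ (k + 1) := by
        rw [abs_mul, abs_mul, abs_pow, abs_of_pos (rpow_pos_of_pos hξ0 _)]
    _ ≤ p ^ (k + 1) * ((2 * exp 1) ^ (1 / 4 : ℝ) * 2 ^ (k + 1)) * |z - 1| ^ (k + 1) := by
        gcongr
        · exact abs_descPochhammer_eval_neg_half_div_factorial_le hp1 (k + 1)
        · exact rpow_neg_half_sub_le hp1 hξp (k + 1)
    _ = _ := by ring

/-- Taylor expansion of `g₂(z) = z^(−p/2)` at `1`: the `j`-th Taylor coefficient is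
bounded by `p^j` in absolute value, and for `|z−1| < 1/(2p)` the order-`k` remainder is
bounded by `p^(k+1)·(2e)^(1/4)·2^(k+1)·|z−1|^(k+1)`. -/
theorem rpow_neg_half_p_taylor (k p : ℕ) (hk : 0 < k) (hp : 0 < p) :
    (∀ j ∈ Finset.Icc 1 k,
      |(-1 / 2 : ℝ) ^ j / (Nat.factorial j : ℝ) * ∏ i ∈ Finset.range j, ((p : ℝ) + 2 * i)|
        ≤ (p : ℝ) ^ j) ∧
    ∀ z : ℝ, 0 < z → |z - 1| < 1 / (2 * (p : ℝ)) →
      |z ^ (-(p : ℝ) / 2) -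
          (1 + ∑ j ∈ Finset.Icc 1 k,
            (-1 / 2 : ℝ) ^ j / (Nat.factorial j : ℝ) *
              (∏ i ∈ Finset.range j, ((p : ℝ) + 2 * i)) * (z - 1) ^ j)|
        ≤ (p : ℝ) ^ (k + 1) * (2 * Real.exp 1) ^ ((1 : ℝ) / 4) * 2 ^ (k + 1) *
            |z - 1| ^ (k + 1) :=
  rpow_neg_half_p_taylor_general k p hp
end
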